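/- X-safety of NI² derivations is preserved by β-reduction: if D β-reduces to D′ and D is X-safe, then D′ is X-safe. -/

import Mathlib

namespace RPT

/-! Core: second-order propositional formulas with ⊃, ∀, ∨ and
Curry–Howard raw terms for NI²∨ (System F with sums). -/

inductive Frm : Type where
  | var : ℕ → Frm
  | imp : Frm → Frm → Frm
  | all : ℕ → Frm → Frm
  | or  : Frm → Frm → Frm
deriving DecidableEq

namespace Frm

/-- `A.occursFree X` : the variable `X` occurs free in `A`. -/
def occursFree : Frm → ℕ → Bool
  | .var Y, X => Y == X
  | .imp A B, X => A.occursFree X || B.occursFree X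
  | .all Y A, X => Y != X && A.occursFree X
  | .or A B, X => A.occursFree X || B.occursFree X

/-- `A.subst C X` : the (naive) substitution `A[C/X]`. -/
def subst : Frm → Frm → ℕ → Frm
  | .var Y, C, X => if Y = X then C else .var Y
  | .imp A B, C, X => .imp (A.subst C X) (B.subst C X)
  | .all Y A, C, X => if Y = X then .all Y A else .all Y (A.subst C X)
  | .or A B, C, X => .or (A.subst C X) (B.subst C X)

/-- `A` belongs to the ∨-free language 𝓛² of NI². -/
def noOr : Frm → Prop
  | .var _ => True
  | .imp A B => A.noOr ∧ B.noOr
  | .all _ A => A.noOr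
  | .or _ _ => False

/-- `A` belongs to the propositional (quantifier-free) language. -/
def propOnly : Frm → Prop
  | .var _ => True
  | .imp A B => A.propOnly ∧ B.propOnly
  | .all _ _ => False
  | .or A B => A.propOnly ∧ B.propOnly

/-- A strict bound on the variables occurring in a formula (for freshness). -/
def varBound : Frm → ℕ
  | .var Y => Y + 1
  | .imp A B => max A.varBound B.varBound
  | .all Y A => max (Y + 1) A.varBound
  | .or A B => max A.varBound B.varBound

end Frm

/-- `SpX X C` : `C` is strictly positive relative to `X`. -/
inductive SpX (X : ℕ) : Frm → Prop where
  | var (Z : ℕ) : SpX X (.var Z)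
  | imp {A B : Frm} : A.occursFree X = false → SpX X B → SpX X (.imp A B)
  | all {Y : ℕ} {A : Frm} : Y ≠ X → SpX X A → SpX X (.all Y A)

/-- Raw derivations of NI²∨, as intrinsically annotated λ-terms. -/
inductive Tm : Type where
  | var : ℕ → Tm
  | lam : ℕ → Frm → Tm → Tm
  | app : Tm → Tm → Tm
  | tlam : ℕ → Tm → Tm
  | tapp : Tm → Frm → Tm
  | inl : Frm → Frm → Tm → Tm
  | inr : Frm → Frm → Tm → Tm
  | case : Frm → Frm → Frm → Tm → ℕ → Tm → ℕ → Tm → Tm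
deriving DecidableEq

namespace Tm

/-- `t.substTm s x` : substitute the term `s` for the assumption variable `x`. -/
def substTm : Tm → Tm → ℕ → Tm
  | .var y, s, x => if y = x then s else .var y
  | .lam y A t, s, x => if y = x then .lam y A t else .lam y A (t.substTm s x)
  | .app t u, s, x => .app (t.substTm s x) (u.substTm s x)
  | .tlam Y t, s, x => .tlam Y (t.substTm s x)
  | .tapp t A, s, x => .tapp (t.substTm s x) A
  | .inl A B t, s, x => .inl A B (t.substTm s x)
  | .inr A B t, s, x => .inr A B (t.substTm s x)
  | .case A B C t y u z v, s, x =>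
      .case A B C (t.substTm s x) y (if y = x then u else u.substTm s x)
        z (if z = x then v else v.substTm s x)

/-- `t.substTy C X` : substitute the formula `C` for the propositional variable `X`. -/
def substTy : Tm → Frm → ℕ → Tm
  | .var y, _, _ => .var y
  | .lam y A t, C, X => .lam y (A.subst C X) (t.substTy C X)
  | .app t u, C, X => .app (t.substTy C X) (u.substTy C X)
  | .tlam Y t, C, X => if Y = X then .tlam Y t else .tlam Y (t.substTy C X)
  | .tapp t A, C, X => .tapp (t.substTy C X) (A.subst C X)
  | .inl A B t, C, X => .inl (A.subst C X) (B.subst C X) (t.substTy C X)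
  | .inr A B t, C, X => .inr (A.subst C X) (B.subst C X) (t.substTy C X)
  | .case A B D t y u z v, C, X =>
      .case (A.subst C X) (B.subst C X) (D.subst C X) (t.substTy C X)
        y (u.substTy C X) z (v.substTy C X)

/-- `t.freeVar x` : the assumption variable `x` occurs free (undischarged) in `t`. -/
def freeVar : Tm → ℕ → Prop
  | .var y, x => y = x
  | .lam y _ t, x => y ≠ x ∧ t.freeVar x
  | .app t u, x => t.freeVar x ∨ u.freeVar x
  | .tlam _ t, x => t.freeVar x
  | .tapp t _, x => t.freeVar x
  | .inl _ _ t, x => t.freeVar x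
  | .inr _ _ t, x => t.freeVar x
  | .case _ _ _ t y u z v, x =>
      t.freeVar x ∨ (y ≠ x ∧ u.freeVar x) ∨ (z ≠ x ∧ v.freeVar x)

/-- `t.tfree X` : the propositional variable `X` occurs free in `t` (in some annotation). -/
def tfree : Tm → ℕ → Prop
  | .var _, _ => False
  | .lam _ A t, X => A.occursFree X = true ∨ t.tfree X
  | .app t u, X => t.tfree X ∨ u.tfree X
  | .tlam Y t, X => Y ≠ X ∧ t.tfree X
  | .tapp t A, X => t.tfree X ∨ A.occursFree X = true
  | .inl A B t, X => A.occursFree X = true ∨ B.occursFree X = true ∨ t.tfree X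
  | .inr A B t, X => A.occursFree X = true ∨ B.occursFree X = true ∨ t.tfree X
  | .case A B C t _ u _ v, X =>
      A.occursFree X = true ∨ B.occursFree X = true ∨ C.occursFree X = true ∨
        t.tfree X ∨ u.tfree X ∨ v.tfree X

/-- A strict bound on all assumption variables mentioned in `t` (for freshness). -/
def varBound : Tm → ℕ
  | .var y => y + 1
  | .lam y _ t => max (y + 1) t.varBound
  | .app t u => max t.varBound u.varBound
  | .tlam _ t => t.varBound
  | .tapp t _ => t.varBound
  | .inl _ _ t => t.varBound
  | .inr _ _ t => t.varBound
  | .case _ _ _ t y u z v =>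
      max (max (y + 1) (z + 1)) (max t.varBound (max u.varBound v.varBound))

/-- `t` is a derivation of the ∨-free system NI². -/
def noOr : Tm → Prop
  | .var _ => True
  | .lam _ A t => A.noOr ∧ t.noOr
  | .app t u => t.noOr ∧ u.noOr
  | .tlam _ t => t.noOr
  | .tapp t A => t.noOr ∧ A.noOr
  | .inl _ _ _ => False
  | .inr _ _ _ => False
  | .case _ _ _ _ _ _ _ _ => False

/-- `t` is a derivation of propositional NI∨ (no second-order rules). -/
def propOnly : Tm → Prop
  | .var _ => True
  | .lam _ A t => A.propOnly ∧ t.propOnly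
  | .app t u => t.propOnly ∧ u.propOnly
  | .tlam _ _ => False
  | .tapp _ _ => False
  | .inl A B t => A.propOnly ∧ B.propOnly ∧ t.propOnly
  | .inr A B t => A.propOnly ∧ B.propOnly ∧ t.propOnly
  | .case A B C t _ u _ v =>
      A.propOnly ∧ B.propOnly ∧ C.propOnly ∧ t.propOnly ∧ u.propOnly ∧ v.propOnly

/-- `t` ends with an application of an introduction rule. -/
def isIntro : Tm → Prop
  | .lam _ _ _ => True
  | .tlam _ _ => True
  | .inl _ _ _ => True
  | .inr _ _ _ => True
  | _ => False

/-- Every application of ∀E in `t` instantiates with an atomic formula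
(the restriction defining NI²_at / atomic System F). -/
def atomic : Tm → Prop
  | .var _ => True
  | .lam _ _ t => t.atomic
  | .app t u => t.atomic ∧ u.atomic
  | .tlam _ t => t.atomic
  | .tapp t A => t.atomic ∧ ∃ Y, A = .var Y
  | .inl _ _ t => t.atomic
  | .inr _ _ t => t.atomic
  | .case _ _ _ t _ u _ v => t.atomic ∧ u.atomic ∧ v.atomic

/-- `X`-safety: no application of ∀E instantiates with a formula containing `X`. -/
def XSafe (X : ℕ) : Tm → Prop
  | .var _ => True
  | .lam _ _ t => t.XSafe X
  | .app t u => t.XSafe X ∧ u.XSafe X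
  | .tlam _ t => t.XSafe X
  | .tapp t B => t.XSafe X ∧ B.occursFree X = false
  | .inl _ _ t => t.XSafe X
  | .inr _ _ t => t.XSafe X
  | .case _ _ _ t _ u _ v => t.XSafe X ∧ u.XSafe X ∧ v.XSafe X

end Tm

/-- Contexts: partial assignment of formulas to assumption labels. -/
abbrev Ctx := ℕ → Option Frm

def Ctx.update (Γ : Ctx) (x : ℕ) (A : Frm) : Ctx := fun y => if y = x then some A else Γ y

def Ctx.empty : Ctx := fun _ => none

/-- The typing relation: `HasType Γ t A` means `t` is an NI²∨-derivation of `A`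
from the undischarged assumptions recorded in `Γ`. -/
inductive HasType : Ctx → Tm → Frm → Prop where
  | var {Γ : Ctx} {x : ℕ} {A : Frm} : Γ x = some A → HasType Γ (.var x) A
  | lam {Γ : Ctx} {x : ℕ} {A B : Frm} {t : Tm} :
      HasType (Γ.update x A) t B → HasType Γ (.lam x A t) (.imp A B)
  | app {Γ : Ctx} {t u : Tm} {A B : Frm} :
      HasType Γ t (.imp A B) → HasType Γ u A → HasType Γ (.app t u) B
  | tlam {Γ : Ctx} {X : ℕ} {t : Tm} {A : Frm} :
      (∀ y B, Γ y = some B → B.occursFree X = false) →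
      HasType Γ t A → HasType Γ (.tlam X t) (.all X A)
  | tapp {Γ : Ctx} {t : Tm} {X : ℕ} {A : Frm} (B : Frm) :
      HasType Γ t (.all X A) → HasType Γ (.tapp t B) (A.subst B X)
  | inl {Γ : Ctx} {t : Tm} {A B : Frm} :
      HasType Γ t A → HasType Γ (.inl A B t) (.or A B)
  | inr {Γ : Ctx} {t : Tm} {A B : Frm} :
      HasType Γ t B → HasType Γ (.inr A B t) (.or A B)
  | case {Γ : Ctx} {t u v : Tm} {A B C : Frm} {x y : ℕ} :
      HasType Γ t (.or A B) → HasType (Γ.update x A) u C → HasType (Γ.update y B) v C →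
      HasType Γ (.case A B C t x u y v) C

/-- β-contractions (detour conversions) for ⊃, ∀ and ∨. -/
inductive BetaB : Tm → Tm → Prop where
  | imp (x : ℕ) (A : Frm) (t s : Tm) : BetaB (.app (.lam x A t) s) (t.substTm s x)
  | all (X : ℕ) (t : Tm) (B : Frm) : BetaB (.tapp (.tlam X t) B) (t.substTy B X)
  | orl (A B C : Frm) (t u v : Tm) (x y : ℕ) :
      BetaB (.case A B C (.inl A B t) x u y v) (u.substTm t x)
  | orr (A B C : Frm) (t u v : Tm) (x y : ℕ) :
      BetaB (.case A B C (.inr A B t) x u y v) (v.substTm t y)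

/-- η-contractions for ⊃ and ∀. -/
inductive EtaB : Tm → Tm → Prop where
  | imp (x : ℕ) (A : Frm) (t : Tm) :
      ¬ t.freeVar x → EtaB (.lam x A (.app t (.var x))) t
  | all (X : ℕ) (t : Tm) :
      ¬ t.tfree X → EtaB (.tlam X (.tapp t (.var X))) t

/-- Closure of a relation under all derivation-forming contexts. -/
inductive Cong (r : Tm → Tm → Prop) : Tm → Tm → Prop where
  | base {t s : Tm} : r t s → Cong r t s
  | lam {x : ℕ} {A : Frm} {t t' : Tm} : Cong r t t' → Cong r (.lam x A t) (.lam x A t')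
  | appL {t t' u : Tm} : Cong r t t' → Cong r (.app t u) (.app t' u)
  | appR {t u u' : Tm} : Cong r u u' → Cong r (.app t u) (.app t u')
  | tlam {X : ℕ} {t t' : Tm} : Cong r t t' → Cong r (.tlam X t) (.tlam X t')
  | tapp {t t' : Tm} {A : Frm} : Cong r t t' → Cong r (.tapp t A) (.tapp t' A)
  | inl {A B : Frm} {t t' : Tm} : Cong r t t' → Cong r (.inl A B t) (.inl A B t')
  | inr {A B : Frm} {t t' : Tm} : Cong r t t' → Cong r (.inr A B t) (.inr A B t')
  | case₁ {A B C : Frm} {t t' u v : Tm} {x y : ℕ} :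
      Cong r t t' → Cong r (.case A B C t x u y v) (.case A B C t' x u y v)
  | case₂ {A B C : Frm} {t u u' v : Tm} {x y : ℕ} :
      Cong r u u' → Cong r (.case A B C t x u y v) (.case A B C t x u' y v)
  | case₃ {A B C : Frm} {t u v v' : Tm} {x y : ℕ} :
      Cong r v v' → Cong r (.case A B C t x u y v) (.case A B C t x u y v')

/-- One-step β-reduction. -/
def Step : Tm → Tm → Prop := Cong BetaB

/-- β-equivalence of derivations. -/
def BetaEq : Tm → Tm → Prop := Relation.EqvGen Step

/-- β-normal derivations. -/
def Normal (t : Tm) : Prop := ∀ s, ¬ Step t s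

/-- restriction of a relation to the ∨-free fragment NI². -/
def RestrNoOr (r : Tm → Tm → Prop) (t s : Tm) : Prop := r t s ∧ t.noOr ∧ s.noOr

/-- The C-expansion `C‖d‖_X` of a derivation relative to `X`.
Here `d` (with distinguished assumption variable `x` of type `A`) is a derivation
of `B` from `A, Δ`, and `cexp X x d C c` turns a derivation `c` of `C[A/X]`
into a derivation of `C[B/X]` by recursion on the sp-`X` formula `C`. -/
def cexp (X x : ℕ) (d : Tm) : Frm → Tm → Tm
  | .var Y, c => if Y = X then d.substTm c x else c
  | .all Y F, c =>
      if (Frm.all Y F).occursFree X then .tlam Y (cexp X x d F (.tapp c (.var Y))) else c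
  | .imp F G, c =>
      if (Frm.imp F G).occursFree X then
        .lam (max d.varBound c.varBound) F
          (cexp X x d G (.app c (.var (max d.varBound c.varBound))))
      else c
  | .or _ _, c => c

/-- `∀ Ȳ. A`. -/
def mkAlls (Ys : List ℕ) (A : Frm) : Frm := Ys.foldr .all A

/-- The body `∀Ȳ₁(F₁ ⊃ ∀Ȳ₂(F₂ ⊃ … ⊃ ∀Ȳₙ(Fₙ ⊃ X)…))` of a quasi sp-`X` formula,
described by a list of blocks `(Ȳᵢ, Fᵢ, kᵢ)` (with `kᵢ` the label of the assumption
serving as the corresponding minor premise). -/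
def qBody (X : ℕ) : List (List ℕ × Frm × ℕ) → Frm
  | [] => .var X
  | (Ys, F, _) :: rest => mkAlls Ys (.imp F (qBody X rest))

/-- Iterated ∀E at the (trivial) instances given by the quantified variables themselves. -/
def tapps (t : Tm) (Ys : List ℕ) : Tm := Ys.foldl (fun s Y => .tapp s (.var Y)) t

/-- Elimination chain through a quasi sp-`X` formula, with minor premises
given by `minor` applied to each block formula and assumption label. -/
def chainElim (minor : Frm → ℕ → Tm) : List (List ℕ × Frm × ℕ) → Tm → Tm
  | [], t => t
  | (Ys, F, k) :: rest, t => chainElim minor rest (.app (tapps t Ys) (minor F k))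

/-- The ε-equation schema: for a quasi sp-`X` premise `∀X F` of ∀E (derived by `d₁`)
and a derivation `d₂` of `B` from `A` (via assumption variable `x`), the left side
instantiates at `A`, eliminates through the chain with assumptions as minor premises,
and continues with `d₂`; the right side instantiates at `B` and uses the
`Fᵢ`-expansions of `d₂` as minor premises. -/
inductive EpsB : Tm → Tm → Prop where
  | mk (X x : ℕ) (blocks : List (List ℕ × Frm × ℕ)) (A B : Frm) (d₁ d₂ : Tm)
      (hq : ∀ p ∈ blocks, SpX X p.2.1 ∧ ∀ Y ∈ p.1, Y ≠ X) :
      EpsB (d₂.substTm (chainElim (fun _ k => .var k) blocks (.tapp d₁ A)) x)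
           (chainElim (fun F k => cexp X x d₂ F (.var k)) blocks (.tapp d₁ B))

/-- `∀X F` is a quasi sp-`X` formula. -/
def QuasiSpX (X : ℕ) (C : Frm) : Prop :=
  ∃ blocks : List (List ℕ × Frm × ℕ),
    C = .all X (qBody X blocks) ∧ ∀ p ∈ blocks, SpX X p.2.1 ∧ ∀ Y ∈ p.1, Y ≠ X

/-- The Russell–Prawitz translation on formulas:
`(A ∨ B)* = ∀X((A*⊃X)⊃(B*⊃X)⊃X)` with `X` fresh. -/
def Frm.rp : Frm → Frm
  | .var Y => .var Y
  | .imp A B => .imp A.rp B.rp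
  | .all Y A => .all Y A.rp
  | .or A B =>
      let A' := Frm.rp A
      let B' := Frm.rp B
      let X := max A'.varBound B'.varBound
      .all X (.imp (.imp A' (.var X)) (.imp (.imp B' (.var X)) (.var X)))

/-- The Russell–Prawitz translation on derivations. -/
def Tm.rp : Tm → Tm
  | .var x => .var x
  | .lam x A t => .lam x A.rp t.rp
  | .app t u => .app t.rp u.rp
  | .tlam X t => .tlam X t.rp
  | .tapp t A => .tapp t.rp A.rp
  | .inl A B t =>
      let A' := Frm.rp A
      let B' := Frm.rp B
      let X := max A'.varBound B'.varBound
      let t' := Tm.rp t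
      let k := t'.varBound
      .tlam X (.lam k (.imp A' (.var X)) (.lam (k + 1) (.imp B' (.var X))
        (.app (.var k) t')))
  | .inr A B t =>
      let A' := Frm.rp A
      let B' := Frm.rp B
      let X := max A'.varBound B'.varBound
      let t' := Tm.rp t
      let k := t'.varBound
      .tlam X (.lam k (.imp A' (.var X)) (.lam (k + 1) (.imp B' (.var X))
        (.app (.var (k + 1)) t')))
  | .case A B C t x u y v =>
      .app (.app (.tapp t.rp C.rp) (.lam x A.rp u.rp)) (.lam y B.rp v.rp)

/-- Parallel substitution of derivations for assumption variables. -/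
def Tm.msubst : Tm → (ℕ → Option Tm) → Tm
  | .var y, σ => (σ y).getD (.var y)
  | .lam y A t, σ => .lam y A (t.msubst fun z => if z = y then none else σ z)
  | .app t u, σ => .app (t.msubst σ) (u.msubst σ)
  | .tlam Y t, σ => .tlam Y (t.msubst σ)
  | .tapp t A, σ => .tapp (t.msubst σ) A
  | .inl A B t, σ => .inl A B (t.msubst σ)
  | .inr A B t, σ => .inr A B (t.msubst σ)
  | .case A B C t y u z v, σ =>
      .case A B C (t.msubst σ) y (u.msubst fun w => if w = y then none else σ w)
        z (v.msubst fun w => if w = z then none else σ w)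

/-- The generalized permutative conversion γ_g∨: an application of ∨E is permuted
downwards across an arbitrary continuation `w` (with hole-variable `z`). -/
inductive GammaGB : Tm → Tm → Prop where
  | perm (A B C D : Frm) (t u v w : Tm) (x y z : ℕ)
      (hx : ¬ w.freeVar x) (hy : ¬ w.freeVar y) :
      GammaGB (w.substTm (.case A B C t x u y v) z)
              (.case A B D t x (w.substTm u z) y (w.substTm v z))

/-- The standard permutative conversions γ∨: ∨E permuted across a single
elimination rule (⊃E or ∨E) of which its conclusion is the major premise. -/
inductive GammaB : Tm → Tm → Prop where
  | app (A B E D : Frm) (t u v s : Tm) (x y : ℕ) :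
      GammaB (.app (.case A B (.imp E D) t x u y v) s)
             (.case A B D t x (.app u s) y (.app v s))
  | case (A B A' B' D : Frm) (t u v u' v' : Tm) (x y x' y' : ℕ) :
      GammaB (.case A' B' D (.case A B (.or A' B') t x u y v) x' u' y' v')
             (.case A B D t x (.case A' B' D u x' u' y' v') y
                (.case A' B' D v x' u' y' v'))

/-- Typing where the major premise of every application of ∀E is required to be a
quasi sp-`X` formula `∀X F`. -/
inductive HasTypeQ (X : ℕ) : Ctx → Tm → Frm → Prop where
  | var {Γ : Ctx} {x : ℕ} {A : Frm} : Γ x = some A → HasTypeQ X Γ (.var x) A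
  | lam {Γ : Ctx} {x : ℕ} {A B : Frm} {t : Tm} :
      HasTypeQ X (Γ.update x A) t B → HasTypeQ X Γ (.lam x A t) (.imp A B)
  | app {Γ : Ctx} {t u : Tm} {A B : Frm} :
      HasTypeQ X Γ t (.imp A B) → HasTypeQ X Γ u A → HasTypeQ X Γ (.app t u) B
  | tlam {Γ : Ctx} {Y : ℕ} {t : Tm} {A : Frm} :
      (∀ y B, Γ y = some B → B.occursFree Y = false) →
      HasTypeQ X Γ t A → HasTypeQ X Γ (.tlam Y t) (.all Y A)
  | tapp {Γ : Ctx} {t : Tm} {A : Frm} (B : Frm) :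
      QuasiSpX X (.all X A) → HasTypeQ X Γ t (.all X A) →
      HasTypeQ X Γ (.tapp t B) (A.subst B X)

/-! A ⊃- or ∨-detour only plugs one X-safe derivation into another, so it creates no new
∀E-instances. A ∀-detour `(ΛY. d) C ↦ d[C/Y]` turns each ∀E-instance `B` of `d` into `B[C/Y]`;
both `B` and `C` are X-free by safety of the redex, hence so is `B[C/Y]`. -/

namespace Frm

theorem occursFree_subst_eq_false {X Y : ℕ} {A C : Frm}
    (hA : A.occursFree X = false) (hC : C.occursFree X = false) :
    (A.subst C Y).occursFree X = false := by
  induction A with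
  | var Z => unfold subst; split <;> assumption
  | imp A B ihA ihB | or A B ihA ihB =>
    simp only [occursFree, Bool.or_eq_false_iff] at hA
    simp only [subst, occursFree, ihA hA.1, ihB hA.2, Bool.or_self]
  | all Z A ih =>
    unfold subst
    split
    · exact hA
    · simp only [occursFree, Bool.and_eq_false_iff] at hA ⊢
      exact hA.imp_right ih

end Frm

namespace Tm

variable {X : ℕ}

theorem XSafe.substTm {s : Tm} (hs : s.XSafe X) {t : Tm} (x : ℕ) (ht : t.XSafe X) :
    (t.substTm s x).XSafe X := by
  induction t with
  | var y => unfold Tm.substTm; split <;> trivial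
  | lam y A t ih => unfold Tm.substTm; split <;> [exact ht; exact ih ht]
  | app t u iht ihu => exact ⟨iht ht.1, ihu ht.2⟩
  | tlam Y t ih | inl A B t ih | inr A B t ih => exact ih ht
  | tapp t A ih => exact ⟨ih ht.1, ht.2⟩
  | case A B C t y u z v iht ihu ihv =>
    refine ⟨iht ht.1, ?_, ?_⟩
    · split <;> [exact ht.2.1; exact ihu ht.2.1]
    · split <;> [exact ht.2.2; exact ihv ht.2.2]

theorem XSafe.substTy {C : Frm} (hC : C.occursFree X = false) {t : Tm} (Y : ℕ)
    (ht : t.XSafe X) : (t.substTy C Y).XSafe X := by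
  induction t with
  | var y => trivial
  | lam y A t ih | inl A B t ih | inr A B t ih => exact ih ht
  | app t u iht ihu => exact ⟨iht ht.1, ihu ht.2⟩
  | tlam Z t ih => unfold Tm.substTy; split <;> [exact ht; exact ih ht]
  | tapp t A ih => exact ⟨ih ht.1, Frm.occursFree_subst_eq_false ht.2 hC⟩
  | case A B D t y u z v iht ihu ihv => exact ⟨iht ht.1, ihu ht.2.1, ihv ht.2.2⟩

theorem XSafe.of_betaB {t t' : Tm} (h : BetaB t t') (ht : t.XSafe X) : t'.XSafe X := by
  cases h with
  | imp x A t s => exact XSafe.substTm ht.2 x ht.1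
  | all Y t B => exact XSafe.substTy ht.2 Y ht.1
  | orl A B C t u v x y => exact XSafe.substTm (s := t) ht.1 x ht.2.1
  | orr A B C t u v x y => exact XSafe.substTm (s := t) ht.1 y ht.2.2

theorem XSafe.of_cong {r : Tm → Tm → Prop} (hr : ∀ t t', r t t' → t.XSafe X → t'.XSafe X)
    {t t' : Tm} (h : Cong r t t') (ht : t.XSafe X) : t'.XSafe X := by
  induction h with
  | base h => exact hr _ _ h ht
  | lam _ ih | tlam _ ih | inl _ ih | inr _ ih => exact ih ht
  | appL _ ih => exact ⟨ih ht.1, ht.2⟩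
  | appR _ ih => exact ⟨ht.1, ih ht.2⟩
  | tapp _ ih => exact ⟨ih ht.1, ht.2⟩
  | case₁ _ ih => exact ⟨ih ht.1, ht.2⟩
  | case₂ _ ih => exact ⟨ht.1, ih ht.2.1, ht.2.2⟩
  | case₃ _ ih => exact ⟨ht.1, ht.2.1, ih ht.2.2⟩

end Tm

theorem xsafe_preserved_by_beta_general (X : ℕ) (t t' : Tm)
    (hstep : Step t t') (hs : t.XSafe X) : t'.XSafe X :=
  Tm.XSafe.of_cong (fun _ _ => Tm.XSafe.of_betaB) hstep hs

/-- X-safety of NI² derivations is preserved by β-reduction. -/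
theorem xsafe_preserved_by_beta (X : ℕ) (Γ : Ctx) (A : Frm) (t t' : Tm)
    (ht : HasType Γ t A) (hno : t.noOr)
    (hstep : Step t t') (hs : t.XSafe X) : t'.XSafe X :=
  xsafe_preserved_by_beta_general X t t' hstep hs

end RPT
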